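/- For any ξ and c ∈ ℝ^m, the threshold c belongs to S(ξ) if and only if the value W_ξ(c) = max over controls u of inf over scenarios w of min{ min_k Φ^c_k(x_k,u_k), Θ^c(x_{N+1}) } is nonnegative, where Φ^c_k(x,u) = min_i (g^k_i(x,u) − c_i) and Θ^c(x) = min_i (θ_i(x) − c_i). -/

import Mathlib

/-- Trajectory of the discrete-time control system `x_{k+1} = F_k(x_k, u_k, ω_k)`, `x_0 = ξ`. -/
def traj {X U W : Type*} (F : ℕ → X → U → W → X) (ξ : X) (u : ℕ → U) (w : ℕ → W) : ℕ → X
  | 0 => ξ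
  | k + 1 => F k (traj F ξ u w k) (u k) (w k)

/-- `u` is admissible for `(ξ, c)`: for every scenario, the mixed and end-point
constraints hold (componentwise, thresholds `c`). -/
def Adm {X U W : Type*} {m : ℕ} (N : ℕ) (F : ℕ → X → U → W → X) (Ω : ℕ → Set W)
    (g : ℕ → X → U → Fin m → ℝ) (θ : X → Fin m → ℝ) (ξ : X) (c : Fin m → ℝ)
    (u : ℕ → U) : Prop :=
  ∀ w : ℕ → W, (∀ k, w k ∈ Ω k) →
    (∀ k ≤ N, c ≤ g k (traj F ξ u w k) (u k)) ∧ c ≤ θ (traj F ξ u w (N + 1))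

/-- The set of robust sustainable thresholds `S(ξ)`. -/
def SST {X U W : Type*} {m : ℕ} (N : ℕ) (F : ℕ → X → U → W → X) (Ω : ℕ → Set W)
    (g : ℕ → X → U → Fin m → ℝ) (θ : X → Fin m → ℝ) (ξ : X) : Set (Fin m → ℝ) :=
  {c | ∃ u : ℕ → U, Adm N F Ω g θ ξ c u}


/-- The level-set cost `J^c(u) = inf_w min{ min_{k≤N} Φ^c_k(x_k,u_k), Θ^c(x_{N+1}) }`,
where `Φ^c_k(x,u) = min_i (g^k_i(x,u) - c_i)` and `Θ^c(x) = min_i (θ_i(x) - c_i)`. -/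
noncomputable def Jfun {X U W : Type*} {m : ℕ} [NeZero m] (N : ℕ)
    (F : ℕ → X → U → W → X) (Ω : ℕ → Set W)
    (g : ℕ → X → U → Fin m → ℝ) (θ : X → Fin m → ℝ) (ξ : X) (c : Fin m → ℝ)
    (u : ℕ → U) : ℝ :=
  ⨅ w : {w : ℕ → W // ∀ k, w k ∈ Ω k},
    min ((Finset.Icc 0 N).inf' (Finset.nonempty_Icc.2 (Nat.zero_le N))
          fun k => ⨅ i, (g k (traj F ξ u w.1 k) (u k) i - c i))
        (⨅ i, (θ (traj F ξ u w.1 (N + 1)) i - c i))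

/-- The level-set value `W_ξ(c) = max_u J^c(u)`. -/
noncomputable def Wval {X U W : Type*} {m : ℕ} [NeZero m] (N : ℕ)
    (F : ℕ → X → U → W → X) (Ω : ℕ → Set W)
    (g : ℕ → X → U → Fin m → ℝ) (θ : X → Fin m → ℝ) (ξ : X) (c : Fin m → ℝ) : ℝ :=
  sSup (Set.range (Jfun N F Ω g θ ξ c))


/-
A control meets the thresholds `c` in every scenario exactly when its worst-case level-set cost
`J^c(u)` is nonnegative, since each `Φ^c_k` and `Θ^c` is a finite minimum of the margins
`g^k_i - c_i`, `θ_i - c_i`. Continuity of the dynamics and upper semicontinuity of the constraints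
make every scenario's cost upper semicontinuous in the control, and so is their infimum `J^c`,
the costs being bounded below. On the compact space of control sequences `J^c` then attains its
supremum `W_ξ(c)`, so `W_ξ(c) ≥ 0` produces an admissible control.
-/

open Set

theorem zero_le_iInf_sub_iff {ι : Type*} [Finite ι] [Nonempty ι] {a c : ι → ℝ} :
    0 ≤ ⨅ i, (a i - c i) ↔ c ≤ a := by
  rw [le_ciInf_iff (finite_range _).bddBelow, Pi.le_def]
  simp only [sub_nonneg]

theorem UpperSemicontinuous.finset_inf' {α ι : Type*} [TopologicalSpace α] {s : Finset ι}
    (hs : s.Nonempty) {f : ι → α → ℝ} (hf : ∀ i ∈ s, UpperSemicontinuous (f i)) :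
    UpperSemicontinuous fun x => s.inf' hs fun i => f i x := by
  simp only [← Finset.inf'_apply]
  exact Finset.inf'_induction hs _ (fun _ h₁ _ h₂ => h₁.inf h₂) hf

theorem UpperSemicontinuous.sub_const {α : Type*} [TopologicalSpace α] {f : α → ℝ}
    (hf : UpperSemicontinuous f) (c : ℝ) : UpperSemicontinuous fun x => f x - c :=
  (continuous_sub_right c).comp_upperSemicontinuous hf fun _ _ h => sub_le_sub_right h c

theorem continuous_traj {X U W : Type*} [TopologicalSpace X] [TopologicalSpace U]
    {F : ℕ → X → U → W → X} {Ω : ℕ → Set W}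
    (hF : ∀ k, ∀ ω ∈ Ω k, Continuous fun p : X × U => F k p.1 p.2 ω) (ξ : X)
    {w : ℕ → W} (hw : ∀ k, w k ∈ Ω k) (k : ℕ) :
    Continuous fun u : ℕ → U => traj F ξ u w k := by
  induction k with
  | zero => exact continuous_const
  | succ k ih => exact (hF k (w k) (hw k)).comp (ih.prodMk (continuous_apply k))

noncomputable def scenarioCost {X U W : Type*} {m : ℕ} (N : ℕ) (F : ℕ → X → U → W → X)
    (g : ℕ → X → U → Fin m → ℝ) (θ : X → Fin m → ℝ) (ξ : X) (c : Fin m → ℝ)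
    (u : ℕ → U) (w : ℕ → W) : ℝ :=
  min ((Finset.Icc 0 N).inf' (Finset.nonempty_Icc.2 (Nat.zero_le N))
        fun k => ⨅ i, (g k (traj F ξ u w k) (u k) i - c i))
      (⨅ i, (θ (traj F ξ u w (N + 1)) i - c i))

section ControlSystem

variable {X U W : Type*} {m N : ℕ} {F : ℕ → X → U → W → X} {Ω : ℕ → Set W}
  {g : ℕ → X → U → Fin m → ℝ} {θ : X → Fin m → ℝ} {ξ : X} {c : Fin m → ℝ}

theorem Jfun_eq_iInf_scenarioCost [NeZero m] (u : ℕ → U) :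
    Jfun N F Ω g θ ξ c u = ⨅ w : {w : ℕ → W // ∀ k, w k ∈ Ω k}, scenarioCost N F g θ ξ c u w :=
  rfl

theorem zero_le_scenarioCost_iff [NeZero m] {u : ℕ → U} {w : ℕ → W} :
    0 ≤ scenarioCost N F g θ ξ c u w ↔
      (∀ k ≤ N, c ≤ g k (traj F ξ u w k) (u k)) ∧ c ≤ θ (traj F ξ u w (N + 1)) := by
  simp only [scenarioCost, le_min_iff, Finset.le_inf'_iff, zero_le_iInf_sub_iff, Finset.mem_Icc,
    zero_le, true_and]

theorem bddBelow_scenarioCost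
    (hg_bdd : ∀ k i, BddBelow (range fun p : X × U => g k p.1 p.2 i))
    (hθ_bdd : ∀ i, BddBelow (range fun x => θ x i)) (u : ℕ → U) :
    BddBelow (range fun w : {w : ℕ → W // ∀ k, w k ∈ Ω k} => scenarioCost N F g θ ξ c u w) := by
  choose bg hbg using hg_bdd
  choose bθ hbθ using hθ_bdd
  refine ⟨min ((Finset.Icc 0 N).inf' (Finset.nonempty_Icc.2 (Nat.zero_le N))
      fun k => ⨅ i, (bg k i - c i)) (⨅ i, (bθ i - c i)), ?_⟩
  rintro _ ⟨w, rfl⟩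
  refine min_le_min (Finset.inf'_mono_fun fun k _ => ?_) ?_ <;>
    refine ciInf_mono (finite_range _).bddBelow fun i => sub_le_sub_right ?_ _
  exacts [hbg k i ⟨(_, _), rfl⟩, hbθ i ⟨_, rfl⟩]

theorem upperSemicontinuous_scenarioCost [TopologicalSpace X] [TopologicalSpace U] [NeZero m]
    (hF : ∀ k, ∀ ω ∈ Ω k, Continuous fun p : X × U => F k p.1 p.2 ω)
    (hg_usc : ∀ k i, UpperSemicontinuous fun p : X × U => g k p.1 p.2 i)
    (hθ_usc : ∀ i, UpperSemicontinuous fun x => θ x i)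
    {w : ℕ → W} (hw : ∀ k, w k ∈ Ω k) :
    UpperSemicontinuous fun u => scenarioCost N F g θ ξ c u w := by
  have htraj := continuous_traj hF ξ hw
  refine .inf (.finset_inf' _ fun k _ => ?_) ?_ <;>
    refine upperSemicontinuous_ciInf (fun _ => (finite_range _).bddBelow) fun i => ?_
  · exact ((hg_usc k i).comp ((htraj k).prodMk (continuous_apply k))).sub_const (c i)
  · exact ((hθ_usc i).comp (htraj (N + 1))).sub_const (c i)

theorem zero_le_Jfun_iff [NeZero m]
    (hg_bdd : ∀ k i, BddBelow (range fun p : X × U => g k p.1 p.2 i))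
    (hθ_bdd : ∀ i, BddBelow (range fun x => θ x i)) {u : ℕ → U} :
    0 ≤ Jfun N F Ω g θ ξ c u ↔ Adm N F Ω g θ ξ c u := by
  rw [Jfun_eq_iInf_scenarioCost]
  constructor
  · intro h w hw
    exact zero_le_scenarioCost_iff.1 <|
      h.trans (ciInf_le (bddBelow_scenarioCost hg_bdd hθ_bdd u) ⟨w, hw⟩)
  · intro h
    exact Real.iInf_nonneg fun w => zero_le_scenarioCost_iff.2 (h w.1 w.2)

theorem upperSemicontinuous_Jfun [TopologicalSpace X] [TopologicalSpace U] [NeZero m]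
    (hF : ∀ k, ∀ ω ∈ Ω k, Continuous fun p : X × U => F k p.1 p.2 ω)
    (hg_usc : ∀ k i, UpperSemicontinuous fun p : X × U => g k p.1 p.2 i)
    (hg_bdd : ∀ k i, BddBelow (range fun p : X × U => g k p.1 p.2 i))
    (hθ_usc : ∀ i, UpperSemicontinuous fun x => θ x i)
    (hθ_bdd : ∀ i, BddBelow (range fun x => θ x i)) :
    UpperSemicontinuous (Jfun N F Ω g θ ξ c) :=
  upperSemicontinuous_ciInf (bddBelow_scenarioCost hg_bdd hθ_bdd)
    fun w => upperSemicontinuous_scenarioCost hF hg_usc hθ_usc w.2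

end ControlSystem

theorem stmt10_general {X U W : Type*} [NormedAddCommGroup X]
    [MetricSpace U] [CompactSpace U] [Nonempty U]
    {m N : ℕ} [NeZero m] (F : ℕ → X → U → W → X) (Ω : ℕ → Set W)
    (g : ℕ → X → U → Fin m → ℝ) (θ : X → Fin m → ℝ)
    (hF : ∀ k, ∀ ω ∈ Ω k, Continuous fun p : X × U => F k p.1 p.2 ω)
    (hg_usc : ∀ k i, UpperSemicontinuous fun p : X × U => g k p.1 p.2 i)
    (hg_bdd : ∀ k i, BddBelow (Set.range fun p : X × U => g k p.1 p.2 i))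
    (hθ_usc : ∀ i, UpperSemicontinuous fun x => θ x i)
    (hθ_bdd : ∀ i, BddBelow (Set.range fun x => θ x i))
    (ξ : X)
    (c : Fin m → ℝ) :
    c ∈ SST N F Ω g θ ξ ↔ 0 ≤ Wval N F Ω g θ ξ c := by
  obtain ⟨u₀, -, hu₀⟩ :=
    ((upperSemicontinuous_Jfun (N := N) (ξ := ξ) (c := c) hF hg_usc hg_bdd hθ_usc
      hθ_bdd).upperSemicontinuousOn univ).exists_isMaxOn univ_nonempty isCompact_univ
  have hW : Wval N F Ω g θ ξ c = Jfun N F Ω g θ ξ c u₀ :=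
    IsGreatest.csSup_eq ⟨⟨u₀, rfl⟩, by rintro _ ⟨u, rfl⟩; exact hu₀ (mem_univ u)⟩
  simp only [hW, SST, mem_ofPred_eq, ← zero_le_Jfun_iff hg_bdd hθ_bdd]
  exact ⟨fun ⟨u, hu⟩ => hu.trans (hu₀ (mem_univ u)), fun h => ⟨u₀, h⟩⟩

theorem stmt10 {X U W : Type*} [NormedAddCommGroup X] [NormedSpace ℝ X]
    [FiniteDimensional ℝ X] [MetricSpace U] [CompactSpace U] [Nonempty U]
    {m N : ℕ} [NeZero m] (F : ℕ → X → U → W → X) (Ω : ℕ → Set W)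
    (hΩ : ∀ k, (Ω k).Nonempty)
    (g : ℕ → X → U → Fin m → ℝ) (θ : X → Fin m → ℝ)
    (hF : ∀ k, ∀ ω ∈ Ω k, Continuous fun p : X × U => F k p.1 p.2 ω)
    (hg_usc : ∀ k i, UpperSemicontinuous fun p : X × U => g k p.1 p.2 i)
    (hg_bdd : ∀ k i, BddBelow (Set.range fun p : X × U => g k p.1 p.2 i))
    (hθ_usc : ∀ i, UpperSemicontinuous fun x => θ x i)
    (hθ_bdd : ∀ i, BddBelow (Set.range fun x => θ x i))
    (ξ : X)
    (c : Fin m → ℝ) :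
    c ∈ SST N F Ω g θ ξ ↔ 0 ≤ Wval N F Ω g θ ξ c :=
  stmt10_general F Ω g θ hF hg_usc hg_bdd hθ_usc hθ_bdd ξ c
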